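/- If u : ℝⁿ → ℝⁿ (n > 1) satisfies d_h(u(x), u(y)) = c·d_h(x,y) for all x, y and some constant c > 0, then c = 1; that is, every dilation of the hyperbolic space (ℝⁿ, d_h), n > 1, is an isometry. -/

import Mathlib

noncomputable def arcosh (t : ℝ) : ℝ := Real.log (t + Real.sqrt (t ^ 2 - 1))

noncomputable def br {n : ℕ} (x : EuclideanSpace ℝ (Fin n)) : ℝ :=
  Real.sqrt (1 + ‖x‖ ^ 2)

noncomputable def dh {n : ℕ} (x y : EuclideanSpace ℝ (Fin n)) : ℝ :=
  arcosh (br x * br y - inner ℝ x y)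

noncomputable def T {n : ℕ} (y x : EuclideanSpace ℝ (Fin n)) : EuclideanSpace ℝ (Fin n) :=
  x + (br x + inner ℝ x y / (br y + 1)) • y

/-! In the hyperboloid model, where `cosh (dh x y) = br x * br y - ⟪x, y⟫`, the midpoint `m` of
two points `x, z` at distance `2d` is `(x + z) / (2 cosh d)`, so every `p` satisfies
`cosh (dh p x) + cosh (dh p z) = 2 cosh d * cosh (dh p m)`. A dilation of ratio `c` preserves this
configuration with `d` scaled by `c`. Applied to a right isosceles triangle with legs `a`, whose
hypotenuse is `h a = arcosh (cosh a ^ 2)`, it gives `h (c * a) = c * h a`. But `h a < 2a` while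
`h a ≥ 2a - 2 log 2`, so `h (cᵏ) / cᵏ = h 1 < 2` is incompatible with `cᵏ → ∞` when `c > 1`;
for `c < 1` the same applies to `c⁻¹`. -/

open Real hiding arcosh
open scoped RealInnerProductSpace

lemma arcosh_eq_real_arcosh : arcosh = Real.arcosh := rfl

section HyperboloidModel

variable {n : ℕ}

lemma br_nonneg (x : EuclideanSpace ℝ (Fin n)) : 0 ≤ br x := sqrt_nonneg _

lemma br_sq (x : EuclideanSpace ℝ (Fin n)) : br x ^ 2 = 1 + ‖x‖ ^ 2 :=
  sq_sqrt (by positivity)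

lemma one_le_br_mul_br_sub_inner (x y : EuclideanSpace ℝ (Fin n)) :
    1 ≤ br x * br y - ⟪x, y⟫ := by
  have h_cs : ⟪x, y⟫ ≤ ‖x‖ * ‖y‖ := real_inner_le_norm x y
  have h_br : 1 + ‖x‖ * ‖y‖ ≤ br x * br y := by
    rw [← pow_le_pow_iff_left₀ (by positivity) (mul_nonneg (br_nonneg x) (br_nonneg y)) two_ne_zero,
      mul_pow, br_sq, br_sq]
    nlinarith [sq_nonneg (‖x‖ - ‖y‖)]
  linarith

lemma cosh_dh (x y : EuclideanSpace ℝ (Fin n)) : cosh (dh x y) = br x * br y - ⟪x, y⟫ :=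
  cosh_arcosh (one_le_br_mul_br_sub_inner x y)

lemma eq_of_cosh_dh_eq_one {x y : EuclideanSpace ℝ (Fin n)} (h : cosh (dh x y) = 1) :
    x = y := by
  rw [cosh_dh] at h
  have h_sq : (1 + ‖x‖ ^ 2) * (1 + ‖y‖ ^ 2) = (1 + ⟪x, y⟫) ^ 2 := by
    rw [← br_sq, ← br_sq, ← mul_pow]; congr 1; linarith
  have h_cs : ⟪x, y⟫ ^ 2 ≤ ‖x‖ ^ 2 * ‖y‖ ^ 2 := by
    simpa only [sq, real_inner_self_eq_norm_mul_norm] using real_inner_mul_inner_self_le x y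
  have : ‖x - y‖ ^ 2 = 0 := by nlinarith [norm_sub_sq_real x y, sq_nonneg ‖x - y‖]
  simpa [sub_eq_zero] using this

lemma br_midpoint {x z : EuclideanSpace ℝ (Fin n)} {d : ℝ} (hd : dh x z = 2 * d) :
    br ((2 * cosh d)⁻¹ • (x + z)) = (br x + br z) / (2 * cosh d) := by
  have h_inner : ⟪x, z⟫ = br x * br z + 1 - 2 * cosh d ^ 2 := by
    have h := cosh_dh x z
    rw [hd, cosh_two_mul, sinh_sq] at h
    linarith
  have h_cosh := cosh_pos d
  rw [br, ← sqrt_sq (by positivity [br_nonneg x, br_nonneg z] : 0 ≤ (br x + br z) / (2 * cosh d))]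
  congr 1
  rw [norm_smul, mul_pow, norm_inv, norm_mul, Real.norm_of_nonneg h_cosh.le, norm_two,
    norm_add_sq_real, h_inner]
  field_simp
  linear_combination -br_sq x - br_sq z

lemma cosh_dh_midpoint {x z : EuclideanSpace ℝ (Fin n)} {d : ℝ} (hd : dh x z = 2 * d)
    (p : EuclideanSpace ℝ (Fin n)) :
    2 * cosh d * cosh (dh p ((2 * cosh d)⁻¹ • (x + z))) = cosh (dh p x) + cosh (dh p z) := by
  rw [cosh_dh, cosh_dh, cosh_dh, br_midpoint hd, real_inner_smul_right, inner_add_right]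
  field_simp [(cosh_pos d).ne']
  ring

lemma eq_midpoint_of_dh_eq {x z m : EuclideanSpace ℝ (Fin n)} {d : ℝ} (hd : dh x z = 2 * d)
    (hx : dh m x = d) (hz : dh m z = d) : m = (2 * cosh d)⁻¹ • (x + z) := by
  apply eq_of_cosh_dh_eq_one
  have h := cosh_dh_midpoint hd m
  rw [hx, hz] at h
  nlinarith [cosh_pos d]

lemma cosh_dh_add_cosh_dh_of_midpoint {x z m : EuclideanSpace ℝ (Fin n)} {d : ℝ}
    (hd : dh x z = 2 * d) (hx : dh m x = d) (hz : dh m z = d) (p : EuclideanSpace ℝ (Fin n)) :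
    cosh (dh p x) + cosh (dh p z) = 2 * cosh d * cosh (dh p m) := by
  rw [← cosh_dh_midpoint hd p, ← eq_midpoint_of_dh_eq hd hx hz]

lemma br_sinh_smul {e : EuclideanSpace ℝ (Fin n)} (he : ‖e‖ = 1) (a : ℝ) :
    br (sinh a • e) = cosh a := by
  rw [br, norm_smul, he, mul_one, Real.norm_eq_abs, sq_abs, ← cosh_sq', sqrt_sq (cosh_pos a).le]

lemma dh_sinh_smul_sinh_smul {e f : EuclideanSpace ℝ (Fin n)} (he : ‖e‖ = 1) (hf : ‖f‖ = 1)
    (a b : ℝ) :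
    dh (sinh a • e) (sinh b • f) = Real.arcosh (cosh a * cosh b - sinh a * sinh b * ⟪e, f⟫) := by
  rw [dh, br_sinh_smul he, br_sinh_smul hf, real_inner_smul_left, real_inner_smul_right,
    mul_assoc, arcosh_eq_real_arcosh]

lemma dh_sinh_smul_sinh_smul_eq {e f : EuclideanSpace ℝ (Fin n)} (he : ‖e‖ = 1) (hf : ‖f‖ = 1)
    {a b r : ℝ} (hr : 0 ≤ r) (h : cosh a * cosh b - sinh a * sinh b * ⟪e, f⟫ = cosh r) :
    dh (sinh a • e) (sinh b • f) = r := by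
  rw [dh_sinh_smul_sinh_smul he hf, h, arcosh_cosh hr]

end HyperboloidModel

/-- By the hyperbolic Pythagorean theorem `cosh c = cosh a * cosh b`, the hypotenuse of a right
triangle whose legs both have length `a`. -/
noncomputable def hypotenuse (a : ℝ) : ℝ := Real.arcosh (cosh a ^ 2)

lemma hypotenuse_nonneg (a : ℝ) : 0 ≤ hypotenuse a :=
  arcosh_nonneg (one_le_pow₀ (one_le_cosh a))

lemma two_mul_sub_log_two_le_hypotenuse (a : ℝ) : 2 * (a - log 2) ≤ hypotenuse a := by
  have h_exp : exp a / 2 ≤ cosh a := by rw [cosh_eq]; linarith [exp_pos (-a)]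
  calc 2 * (a - log 2) = log ((exp a / 2) ^ 2) := by rw [log_pow, log_div, log_exp] <;> simp
    _ ≤ log (cosh a ^ 2) := log_le_log (by positivity) (by gcongr)
    _ ≤ hypotenuse a := log_le_log (by positivity) (le_add_of_nonneg_right (sqrt_nonneg _))

lemma hypotenuse_lt_two_mul {a : ℝ} (ha : 0 < a) : hypotenuse a < 2 * a := by
  rw [hypotenuse, ← arcosh_cosh (by positivity : 0 ≤ 2 * a),
    arcosh_lt_arcosh (by positivity) (cosh_pos _), cosh_two_mul]
  have := sinh_pos_iff.2 ha
  nlinarith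

lemma le_one_of_hypotenuse_mul {b : ℝ}
    (h : ∀ a, 0 ≤ a → hypotenuse (b * a) = b * hypotenuse a) : b ≤ 1 := by
  by_contra! hb
  have h_pow : ∀ k : ℕ, hypotenuse (b ^ k) = b ^ k * hypotenuse 1 := by
    intro k
    induction k with
    | zero => simp
    | succ k ih => rw [pow_succ', mul_assoc, ← ih, ← h _ (by positivity)]
  have h_gap : 0 < 2 - hypotenuse 1 := by linarith [hypotenuse_lt_two_mul one_pos]
  obtain ⟨k, hk⟩ := pow_unbounded_of_one_lt (2 * log 2 / (2 - hypotenuse 1)) hb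
  rw [div_lt_iff₀ h_gap] at hk
  have := two_mul_sub_log_two_le_hypotenuse (b ^ k)
  rw [h_pow] at this
  linarith

lemma eq_one_of_hypotenuse_mul {c : ℝ} (hc : 0 < c)
    (h : ∀ a, 0 ≤ a → hypotenuse (c * a) = c * hypotenuse a) : c = 1 := by
  refine le_antisymm (le_one_of_hypotenuse_mul h) ((inv_le_one₀ hc).1 ?_)
  refine le_one_of_hypotenuse_mul fun a ha ↦ ?_
  rw [eq_inv_mul_iff_mul_eq₀ hc.ne', ← h _ (by positivity), mul_inv_cancel_left₀ hc.ne']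

lemma hypotenuse_mul_of_dilation {n : ℕ} (hn : 1 < n)
    {u : EuclideanSpace ℝ (Fin n) → EuclideanSpace ℝ (Fin n)} {c : ℝ} (hc : 0 ≤ c)
    (hu : ∀ x y, dh (u x) (u y) = c * dh x y) {a : ℝ} (ha : 0 ≤ a) :
    hypotenuse (c * a) = c * hypotenuse a := by
  have hv := (EuclideanSpace.basisFun (Fin n) ℝ).orthonormal
  set e := EuclideanSpace.basisFun (Fin n) ℝ ⟨0, by omega⟩
  set f := EuclideanSpace.basisFun (Fin n) ℝ ⟨1, hn⟩
  have he : ‖e‖ = 1 := hv.1 _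
  have hf : ‖f‖ = 1 := hv.1 _
  have hef : ⟪f, e⟫ = 0 := hv.2 (by simp)
  have hee : ⟪e, e⟫ = 1 := by rw [real_inner_self_eq_norm_sq, he, one_pow]
  -- `m = sinh 0 • e = 0` is the midpoint of `x = sinh a • e` and `z = sinh (-a) • e`, and
  -- `p = sinh a • f` lies at distance `a` from `m` in the perpendicular direction.
  have hxz : dh (sinh a • e) (sinh (-a) • e) = 2 * a :=
    dh_sinh_smul_sinh_smul_eq he he (by positivity)
      (by rw [hee, cosh_neg, sinh_neg, cosh_two_mul]; ring)
  have hmx : dh (sinh 0 • e) (sinh a • e) = a :=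
    dh_sinh_smul_sinh_smul_eq he he ha (by simp)
  have hmz : dh (sinh 0 • e) (sinh (-a) • e) = a :=
    dh_sinh_smul_sinh_smul_eq he he ha (by simp)
  have hpm : dh (sinh a • f) (sinh 0 • e) = a :=
    dh_sinh_smul_sinh_smul_eq hf he ha (by simp)
  have hpx : dh (sinh a • f) (sinh a • e) = hypotenuse a := by
    rw [dh_sinh_smul_sinh_smul hf he, hef, hypotenuse]
    congr 1
    ring
  have hpz : dh (sinh a • f) (sinh (-a) • e) = hypotenuse a := by
    rw [dh_sinh_smul_sinh_smul hf he, hef, hypotenuse, cosh_neg]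
    congr 1
    ring
  have h := cosh_dh_add_cosh_dh_of_midpoint (d := c * a) (by rw [hu, hxz]; ring) (by rw [hu, hmx])
    (by rw [hu, hmz]) (u (sinh a • f))
  rw [hu, hu, hu, hpx, hpz, hpm] at h
  rw [hypotenuse, ← arcosh_cosh (mul_nonneg hc (hypotenuse_nonneg a))]
  congr 1
  linarith

theorem dh_dilation_is_isometry {n : ℕ} (hn : 1 < n)
    (u : EuclideanSpace ℝ (Fin n) → EuclideanSpace ℝ (Fin n)) (c : ℝ) (hc : 0 < c)
    (hu : ∀ x y, dh (u x) (u y) = c * dh x y) : c = 1 :=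
  eq_one_of_hypotenuse_mul hc fun _ ha ↦ hypotenuse_mul_of_dilation hn hc.le hu ha
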